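/- Let C = (G, ℓ) be a tropical curve with connected graph G having at least 2 leaves. Then Ω(C) is the direct sum of the subspace Ω_0(C) of exact 1-forms and the subspace Ω_H(C) of holomorphic 1-forms: Ω_0(C) ∩ Ω_H(C) = {0} and Ω_0(C) + Ω_H(C) = Ω(C). -/

import Mathlib

/-- A graph in the sense of the paper: finite sets of vertices, oriented edges
(with fixed-point-free reversal involution and target map) and leaves (with
attachment map), together with a positive, reversal-invariant length function. -/
structure TropCurve where
  V : Type
  E : Type
  L : Type
  fintV : Fintype V
  fintE : Fintype E
  fintL : Fintype L
  decV : DecidableEq V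
  decE : DecidableEq E
  decL : DecidableEq L
  /-- edge reversal `e ↦ -e` -/
  rev : E → E
  rev_invol : ∀ e, rev (rev e) = e
  rev_ne : ∀ e, rev e ≠ e
  /-- target vertex of an oriented edge -/
  tgt : E → V
  /-- vertex to which a leaf is attached -/
  leafV : L → V
  /-- length function ℓ -/
  len : E → ℝ
  len_pos : ∀ e, 0 < len e
  len_rev : ∀ e, len (rev e) = len e

attribute [instance] TropCurve.fintV TropCurve.fintE TropCurve.fintL
  TropCurve.decV TropCurve.decE TropCurve.decL

namespace TropCurve

variable (C : TropCurve)

/-- The vertex `v(h)` attached to a half-edge `h ∈ E ⊔ L`. -/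
def vert : C.E ⊕ C.L → C.V := Sum.elim C.tgt C.leafV

/-- A 1-form on the tropical curve: `w(-e) = -w(e)` and the balance condition
at every vertex. -/
def IsOneForm (w : C.E ⊕ C.L → ℝ) : Prop :=
  (∀ e : C.E, w (Sum.inl (C.rev e)) = - w (Sum.inl e)) ∧
  (∀ p : C.V, ∑ h : C.E ⊕ C.L, (if C.vert h = p then w h else 0) = 0)

/-- A path: a finite sequence of oriented edges `h_1 ⋯ h_n` with
`v(h_i) = v(-h_{i+1})`. -/
def IsPath (ρ : List C.E) : Prop :=
  ∀ i : ℕ, (h : i + 1 < ρ.length) →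
    C.tgt (ρ.get ⟨i, Nat.lt_of_succ_lt h⟩) = C.tgt (C.rev (ρ.get ⟨i + 1, h⟩))

/-- A loop: a path with `v(h_n) = v(-h_1)`. -/
def IsLoop (ρ : List C.E) : Prop :=
  C.IsPath ρ ∧ ∀ h : ρ ≠ [], C.tgt (ρ.getLast h) = C.tgt (C.rev (ρ.head h))

/-- `∫_ρ w = Σ_j ℓ(h_j) w(h_j)`. -/
noncomputable def pathIntegral (ρ : List C.E) (w : C.E ⊕ C.L → ℝ) : ℝ :=
  ∑ i : Fin ρ.length, C.len (ρ.get i) * w (Sum.inl (ρ.get i))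

/-- A 1-form is exact if its integral along every loop vanishes. -/
def IsExact (w : C.E ⊕ C.L → ℝ) : Prop :=
  C.IsOneForm w ∧ ∀ ρ : List C.E, C.IsLoop ρ → C.pathIntegral ρ w = 0

/-- A 1-form is holomorphic if all its residues vanish. -/
def IsHolo (w : C.E ⊕ C.L → ℝ) : Prop :=
  C.IsOneForm w ∧ ∀ l : C.L, w (Sum.inr l) = 0

/-- Connectedness of the underlying graph. -/
def Connected : Prop :=
  ∀ p q : C.V, p = q ∨ ∃ ρ : List C.E, ∃ hne : ρ ≠ [],
    C.IsPath ρ ∧ C.tgt (C.rev (ρ.head hne)) = p ∧ C.tgt (ρ.getLast hne) = q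

/-- A simple loop: a nonempty loop whose underlying unoriented edges are
pairwise distinct. -/
def IsSimpleLoop (ρ : List C.E) : Prop :=
  C.IsLoop ρ ∧ ρ ≠ [] ∧ List.Pairwise (fun e e' => e ≠ e' ∧ e ≠ C.rev e') ρ

/-- The dual function `w^ρ` of a loop `ρ`. -/
noncomputable def dualForm (ρ : List C.E) : C.E ⊕ C.L → ℝ :=
  fun h => match h with
  | Sum.inl e => if e ∈ ρ then 1 else if C.rev e ∈ ρ then -1 else 0
  | Sum.inr _ => 0

/-- A simple path from the leaf `l₁` to the leaf `l₂`. -/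
def IsSimplePathBetween (ρ : List C.E) (l₁ l₂ : C.L) : Prop :=
  C.IsPath ρ ∧ List.Pairwise (fun e e' => e ≠ e' ∧ e ≠ C.rev e') ρ ∧
  (∀ hne : ρ ≠ [],
    C.tgt (C.rev (ρ.head hne)) = C.leafV l₁ ∧ C.tgt (ρ.getLast hne) = C.leafV l₂) ∧
  (ρ = [] → C.leafV l₁ = C.leafV l₂)

/-- The dual function `w^ρ` of a simple path `ρ` from `l₁` to `l₂`. -/
noncomputable def dualPathForm (ρ : List C.E) (l₁ l₂ : C.L) : C.E ⊕ C.L → ℝ :=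
  fun h => match h with
  | Sum.inl e => if e ∈ ρ then 1 else if C.rev e ∈ ρ then -1 else 0
  | Sum.inr l => if l = l₁ then 1 else if l = l₂ then -1 else 0

/-- The edge pairing `⟨w, w'⟩ = (1/2) Σ_{e ∈ E} ℓ(e) w(e) w'(e)`. -/
noncomputable def pairing (w w' : C.E ⊕ C.L → ℝ) : ℝ :=
  (1 / 2) * ∑ e : C.E, C.len e * w (Sum.inl e) * w' (Sum.inl e)

/-- The space `Ω(C)` of 1-forms, as a submodule of the functions on `E ⊔ L`. -/
noncomputable def Omega : Submodule ℝ (C.E ⊕ C.L → ℝ) where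
  carrier := {w | C.IsOneForm w}
  zero_mem' := by
    refine ⟨fun e => by simp, fun p => ?_⟩
    simp
  add_mem' := by
    rintro a b ⟨ha1, ha2⟩ ⟨hb1, hb2⟩
    refine ⟨fun e => ?_, fun p => ?_⟩
    · have h1 := ha1 e
      have h2 := hb1 e
      simp only [Pi.add_apply] at h1 h2 ⊢
      linarith
    · have : (∑ h : C.E ⊕ C.L, if C.vert h = p then (a + b) h else 0)
          = (∑ h : C.E ⊕ C.L, if C.vert h = p then a h else 0)
            + (∑ h : C.E ⊕ C.L, if C.vert h = p then b h else 0) := by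
        rw [← Finset.sum_add_distrib]
        refine Finset.sum_congr rfl fun h _ => ?_
        by_cases hh : C.vert h = p <;> simp [hh]
      rw [this, ha2 p, hb2 p, add_zero]
  smul_mem' := by
    rintro c a ⟨ha1, ha2⟩
    refine ⟨fun e => ?_, fun p => ?_⟩
    · have h1 := ha1 e
      simp only [Pi.smul_apply, smul_eq_mul] at h1 ⊢
      rw [h1]; ring
    · have : (∑ h : C.E ⊕ C.L, if C.vert h = p then (c • a) h else 0)
          = c * (∑ h : C.E ⊕ C.L, if C.vert h = p then a h else 0) := by
        rw [Finset.mul_sum]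
        refine Finset.sum_congr rfl fun h _ => ?_
        by_cases hh : C.vert h = p <;> simp [hh]
      rw [this, ha2 p, mul_zero]

lemma pathIntegral_add (ρ : List C.E) (a b : C.E ⊕ C.L → ℝ) :
    C.pathIntegral ρ (a + b) = C.pathIntegral ρ a + C.pathIntegral ρ b := by
  simp [pathIntegral, ← Finset.sum_add_distrib, mul_add]

lemma pathIntegral_smul (ρ : List C.E) (c : ℝ) (a : C.E ⊕ C.L → ℝ) :
    C.pathIntegral ρ (c • a) = c * C.pathIntegral ρ a := by
  simp [pathIntegral, Finset.mul_sum]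
  refine Finset.sum_congr rfl fun i _ => by ring

/-- The space `Ω_0(C)` of exact 1-forms. -/
noncomputable def Omega0 : Submodule ℝ (C.E ⊕ C.L → ℝ) where
  carrier := {w | C.IsExact w}
  zero_mem' := by
    refine ⟨(C.Omega).zero_mem, fun ρ _ => ?_⟩
    simp [pathIntegral]
  add_mem' := by
    rintro a b ⟨ha1, ha2⟩ ⟨hb1, hb2⟩
    exact ⟨(C.Omega).add_mem ha1 hb1,
      fun ρ hρ => by rw [C.pathIntegral_add, ha2 ρ hρ, hb2 ρ hρ, add_zero]⟩
  smul_mem' := by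
    rintro c a ⟨ha1, ha2⟩
    exact ⟨(C.Omega).smul_mem c ha1,
      fun ρ hρ => by rw [C.pathIntegral_smul, ha2 ρ hρ, mul_zero]⟩

/-- The space `Ω_H(C)` of holomorphic 1-forms. -/
noncomputable def OmegaH : Submodule ℝ (C.E ⊕ C.L → ℝ) where
  carrier := {w | C.IsHolo w}
  zero_mem' := ⟨(C.Omega).zero_mem, fun l => rfl⟩
  add_mem' := by
    rintro a b ⟨ha1, ha2⟩ ⟨hb1, hb2⟩
    exact ⟨(C.Omega).add_mem ha1 hb1,
      fun l => by simp [Pi.add_apply, ha2 l, hb2 l]⟩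
  smul_mem' := by
    rintro c a ⟨ha1, ha2⟩
    exact ⟨(C.Omega).smul_mem c ha1,
      fun l => by simp [Pi.smul_apply, ha2 l]⟩

end TropCurve


namespace TropCurve

variable {C : TropCurve}

/-! ### Path machinery -/

/-- The consecutivity relation for paths. -/
def Rel (C : TropCurve) (a b : C.E) : Prop := C.tgt a = C.tgt (C.rev b)

lemma isPath_iff_chain' (ρ : List C.E) : C.IsPath ρ ↔ List.Chain' (Rel C) ρ := by
  show C.IsPath ρ ↔ List.IsChain (Rel C) ρ
  rw [List.isChain_iff_getElem]
  constructor
  · intro h i hi; exact h i (by omega)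
  · intro h i hi; exact h i (by omega)

lemma pathIntegral_eq_listSum (ρ : List C.E) (w : C.E ⊕ C.L → ℝ) :
    C.pathIntegral ρ w = (ρ.map (fun e => C.len e * w (Sum.inl e))).sum := by
  rw [pathIntegral, ← Fin.sum_univ_fun_getElem]
  rfl

lemma pathIntegral_append (ρ₁ ρ₂ : List C.E) (w : C.E ⊕ C.L → ℝ) :
    C.pathIntegral (ρ₁ ++ ρ₂) w = C.pathIntegral ρ₁ w + C.pathIntegral ρ₂ w := by
  simp [pathIntegral_eq_listSum]

/-- The reversed path. -/
def revP (C : TropCurve) (ρ : List C.E) : List C.E := (ρ.map C.rev).reverse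

lemma revP_ne_nil {ρ : List C.E} (h : ρ ≠ []) : revP C ρ ≠ [] := by
  simp [revP, h]

lemma chain'_revP {ρ : List C.E} (h : List.Chain' (Rel C) ρ) :
    List.Chain' (Rel C) (revP C ρ) := by
  change List.IsChain (Rel C) ρ at h
  show List.IsChain (Rel C) (revP C ρ)
  rw [revP, List.isChain_reverse, List.isChain_map]
  refine h.imp ?_
  intro a b hab
  show C.tgt (C.rev b) = C.tgt (C.rev (C.rev a))
  rw [C.rev_invol]
  exact hab.symm

lemma head_revP {ρ : List C.E} (h : ρ ≠ []) :
    (revP C ρ).head (revP_ne_nil h) = C.rev (ρ.getLast h) := by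
  simp [revP]

lemma getLast_revP {ρ : List C.E} (h : ρ ≠ []) :
    (revP C ρ).getLast (revP_ne_nil h) = C.rev (ρ.head h) := by
  simp [revP]

lemma sum_map_neg' {α : Type*} (l : List α) (f : α → ℝ) :
    (l.map (fun x => -f x)).sum = -(l.map f).sum := by
  induction l with
  | nil => simp
  | cons a t ih => simp [ih]; ring

lemma pathIntegral_revP (ρ : List C.E) (w : C.E ⊕ C.L → ℝ)
    (hrev : ∀ e, w (Sum.inl (C.rev e)) = - w (Sum.inl e)) :
    C.pathIntegral (revP C ρ) w = - C.pathIntegral ρ w := by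
  rw [pathIntegral_eq_listSum, pathIntegral_eq_listSum, revP, List.map_reverse,
    List.sum_reverse, List.map_map]
  have : ((fun e => C.len e * w (Sum.inl e)) ∘ C.rev)
      = fun e => -(C.len e * w (Sum.inl e)) := by
    funext e
    simp [Function.comp, C.len_rev, hrev e]
  rw [this, sum_map_neg']

/-! ### The potential of an exact form -/

/-- A potential for a 1-form, defined by integrating along chosen paths from a
base point. -/
noncomputable def pot (C : TropCurve) (hconn : C.Connected) (w : C.E ⊕ C.L → ℝ)
    (p₀ p : C.V) : ℝ :=
  if h : p₀ = p then 0
  else C.pathIntegral ((hconn p₀ p).resolve_left h).choose w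

lemma pot_spec (hconn : C.Connected) (w : C.E ⊕ C.L → ℝ) (p₀ : C.V)
    (hex : C.IsExact w) {q : C.V} (ρ : List C.E) (hne : ρ ≠ []) (hρ : C.IsPath ρ)
    (h1 : C.tgt (C.rev (ρ.head hne)) = p₀) (h2 : C.tgt (ρ.getLast hne) = q) :
    pot C hconn w p₀ q = C.pathIntegral ρ w := by
  by_cases h : p₀ = q
  · have hloop : C.IsLoop ρ := ⟨hρ, fun hne' => by rw [h2, ← h, ← h1]⟩
    rw [pot, dif_pos h, hex.2 ρ hloop]
  · rw [pot, dif_neg h]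
    obtain ⟨hne', hρ', hh', hl'⟩ := ((hconn p₀ q).resolve_left h).choose_spec
    set ρ' := ((hconn p₀ q).resolve_left h).choose with hρ'def
    have hchain : List.Chain' (Rel C) (ρ ++ revP C ρ') := by
      apply List.IsChain.append ((isPath_iff_chain' ρ).1 hρ)
        (chain'_revP ((isPath_iff_chain' ρ').1 hρ'))
      intro x hx y hy
      rw [List.getLast?_eq_getLast hne, Option.mem_some_iff] at hx
      rw [List.head?_eq_head (revP_ne_nil hne'), Option.mem_some_iff] at hy
      subst hx; subst hy
      show C.tgt _ = _
      rw [head_revP hne', C.rev_invol, h2, hl']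
    have hloop : C.IsLoop (ρ ++ revP C ρ') := by
      refine ⟨(isPath_iff_chain' _).2 hchain, fun hne'' => ?_⟩
      rw [List.getLast_append_of_ne_nil _ (revP_ne_nil hne'), getLast_revP hne',
        List.head_append_of_ne_nil hne]
      rw [h1, hh']
    have hzero := hex.2 _ hloop
    rw [pathIntegral_append, pathIntegral_revP ρ' w hex.1.1] at hzero
    linarith

lemma pot_base (hconn : C.Connected) (w : C.E ⊕ C.L → ℝ) (p₀ : C.V) :
    pot C hconn w p₀ p₀ = 0 := dif_pos rfl

lemma pathIntegral_singleton (e : C.E) (w : C.E ⊕ C.L → ℝ) :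
    C.pathIntegral [e] w = C.len e * w (Sum.inl e) := by
  simp [pathIntegral_eq_listSum]

lemma pot_step (hconn : C.Connected) (w : C.E ⊕ C.L → ℝ) (p₀ : C.V)
    (hex : C.IsExact w) (e : C.E) :
    pot C hconn w p₀ (C.tgt e)
      = pot C hconn w p₀ (C.tgt (C.rev e)) + C.len e * w (Sum.inl e) := by
  by_cases h : p₀ = C.tgt (C.rev e)
  · have h0 : pot C hconn w p₀ (C.tgt (C.rev e)) = 0 := by rw [pot, dif_pos h]
    have hse : pot C hconn w p₀ (C.tgt e) = C.pathIntegral [e] w := by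
      refine pot_spec hconn w p₀ hex [e] (by simp) ?_ ?_ ?_
      · intro i hi; simp at hi
      · simpa using h.symm
      · simp
    rw [hse, h0, pathIntegral_singleton, zero_add]
  · obtain ⟨hne', hρ', hh', hl'⟩ := ((hconn p₀ (C.tgt (C.rev e))).resolve_left h).choose_spec
    set ρ := ((hconn p₀ (C.tgt (C.rev e))).resolve_left h).choose with hρdef
    have ha : pot C hconn w p₀ (C.tgt (C.rev e)) = C.pathIntegral ρ w := by
      rw [pot, dif_neg h]
    have hchain : List.Chain' (Rel C) (ρ ++ [e]) := by
      apply List.IsChain.append ((isPath_iff_chain' ρ).1 hρ') (List.isChain_singleton e)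
      intro x hx y hy
      rw [List.getLast?_eq_getLast hne', Option.mem_some_iff] at hx
      simp only [List.head?_cons, Option.mem_some_iff] at hy
      subst hx; subst hy
      exact hl'
    have hb : pot C hconn w p₀ (C.tgt e) = C.pathIntegral (ρ ++ [e]) w := by
      refine pot_spec hconn w p₀ hex (ρ ++ [e]) (by simp) ((isPath_iff_chain' _).2 hchain) ?_ ?_
      · rw [List.head_append_of_ne_nil hne']; exact hh'
      · rw [List.getLast_append_of_ne_nil _ (by simp : ([e] : List C.E) ≠ [])]
        simp
    rw [hb, pathIntegral_append, pathIntegral_singleton, ha]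

/-! ### Summation lemmas -/

lemma sum_rev_zero (g : C.E → ℝ) (hg : ∀ e, g (C.rev e) = -g e) :
    ∑ e, g e = 0 := by
  have hb : Function.Bijective C.rev := Function.Involutive.bijective C.rev_invol
  have h1 : ∑ e, g e = ∑ e, g (C.rev e) :=
    (Fintype.sum_bijective C.rev hb _ _ (fun x => by rw [C.rev_invol]))
  have h2 : ∑ e, g (C.rev e) = ∑ e, -g e := Finset.sum_congr rfl (fun e _ => hg e)
  rw [h2, Finset.sum_neg_distrib] at h1
  linarith

lemma fiber_sum (f : C.V → ℝ) (g : C.E → ℝ) :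
    ∑ p, f p * ∑ e, (if C.tgt e = p then g e else 0) = ∑ e, f (C.tgt e) * g e := by
  have h1 : ∀ p, f p * ∑ e, (if C.tgt e = p then g e else 0)
      = ∑ e, (if C.tgt e = p then f p * g e else 0) := by
    intro p
    rw [Finset.mul_sum]
    refine Finset.sum_congr rfl (fun e _ => ?_)
    by_cases h : C.tgt e = p <;> simp [h]
  simp_rw [h1]
  rw [Finset.sum_comm]
  refine Finset.sum_congr rfl (fun e _ => ?_)
  simp [Finset.sum_ite_eq]

lemma energy (f : C.V → ℝ) (g : C.E → ℝ) (hg : ∀ e, g (C.rev e) = -g e) :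
    ∑ e, (f (C.tgt e) - f (C.tgt (C.rev e))) * g e
      = 2 * ∑ p, f p * ∑ e, (if C.tgt e = p then g e else 0) := by
  rw [fiber_sum]
  have hb : Function.Bijective C.rev := Function.Involutive.bijective C.rev_invol
  have h1 : ∑ e, f (C.tgt (C.rev e)) * g e = ∑ e, f (C.tgt e) * g (C.rev e) := by
    refine Fintype.sum_bijective C.rev hb _ _ (fun x => ?_)
    rw [C.rev_invol]
  have h2 : ∑ e, f (C.tgt e) * g (C.rev e) = - ∑ e, f (C.tgt e) * g e := by
    rw [← Finset.sum_neg_distrib]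
    refine Finset.sum_congr rfl (fun e _ => ?_)
    rw [hg e]; ring
  have h3 : ∑ e, (f (C.tgt e) - f (C.tgt (C.rev e))) * g e
      = ∑ e, f (C.tgt e) * g e - ∑ e, f (C.tgt (C.rev e)) * g e := by
    rw [← Finset.sum_sub_distrib]
    refine Finset.sum_congr rfl (fun e _ => ?_); ring
  rw [h3, h1, h2]; ring

lemma edge_balance {w : C.E ⊕ C.L → ℝ} (hw : C.IsOneForm w) (p : C.V) :
    ∑ e, (if C.tgt e = p then w (Sum.inl e) else 0)
      = - ∑ l, (if C.leafV l = p then w (Sum.inr l) else 0) := by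
  have := hw.2 p
  rw [Fintype.sum_sum_type] at this
  simp only [vert, Sum.elim_inl, Sum.elim_inr] at this
  rw [eq_neg_iff_add_eq_zero]; exact this

/-! ### Part 1: the intersection is trivial -/

lemma exact_holo_zero (hconn : C.Connected) (hV : Nonempty C.V)
    {w : C.E ⊕ C.L → ℝ} (hex : C.IsExact w) (hres : ∀ l, w (Sum.inr l) = 0) :
    w = 0 := by
  obtain ⟨p₀⟩ := hV
  set f := pot C hconn w p₀ with hf
  have hstep : ∀ e, f (C.tgt e) - f (C.tgt (C.rev e)) = C.len e * w (Sum.inl e) := by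
    intro e
    rw [hf, pot_step hconn w p₀ hex e]; ring
  have hbal : ∀ p, ∑ e, (if C.tgt e = p then w (Sum.inl e) else 0) = 0 := by
    intro p
    rw [edge_balance hex.1 p]
    simp [hres]
  have hE : ∑ e, C.len e * (w (Sum.inl e) * w (Sum.inl e)) = 0 := by
    have h := energy f (fun e => w (Sum.inl e)) hex.1.1
    simp only [hbal, mul_zero, Finset.sum_const_zero, mul_zero] at h
    rw [← h]
    refine Finset.sum_congr rfl (fun e _ => ?_)
    rw [hstep e]; ring
  have hzero : ∀ e, w (Sum.inl e) = 0 := by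
    have hnn : ∀ e ∈ Finset.univ, (0:ℝ) ≤ C.len e * (w (Sum.inl e) * w (Sum.inl e)) :=
      fun e _ => mul_nonneg (C.len_pos e).le (mul_self_nonneg _)
    intro e
    have := (Finset.sum_eq_zero_iff_of_nonneg hnn).1 hE e (Finset.mem_univ e)
    have hlne := (C.len_pos e).ne'
    have := mul_eq_zero.1 this
    rcases this with h | h
    · exact absurd h hlne
    · exact mul_self_eq_zero.1 h
  funext h
  cases h with
  | inl e => exact hzero e
  | inr l => exact hres l

/-! ### Part 2: the Laplacian and surjectivity -/

/-- The discrete gradient. -/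
noncomputable def grad (C : TropCurve) (f : C.V → ℝ) (e : C.E) : ℝ :=
  (f (C.tgt e) - f (C.tgt (C.rev e))) / C.len e

lemma grad_rev (f : C.V → ℝ) (e : C.E) : grad C f (C.rev e) = - grad C f e := by
  rw [grad, grad, C.rev_invol, C.len_rev, ← neg_div, neg_sub]

lemma len_mul_grad (f : C.V → ℝ) (e : C.E) :
    C.len e * grad C f e = f (C.tgt e) - f (C.tgt (C.rev e)) := by
  rw [grad, mul_div_cancel₀ _ (C.len_pos e).ne']

/-- The weighted graph Laplacian. -/
noncomputable def lap (C : TropCurve) : (C.V → ℝ) →ₗ[ℝ] (C.V → ℝ) where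
  toFun f := fun p => ∑ e, if C.tgt e = p then grad C f e else 0
  map_add' f g := by
    funext p
    show (∑ e, if C.tgt e = p then grad C (f + g) e else 0)
      = (∑ e, if C.tgt e = p then grad C f e else 0)
        + (∑ e, if C.tgt e = p then grad C g e else 0)
    rw [← Finset.sum_add_distrib]
    refine Finset.sum_congr rfl (fun e _ => ?_)
    by_cases h : C.tgt e = p <;> simp [h, grad, Pi.add_apply]
    ring
  map_smul' c f := by
    funext p
    show (∑ e, if C.tgt e = p then grad C (c • f) e else 0)
      = c * ∑ e, if C.tgt e = p then grad C f e else 0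
    rw [Finset.mul_sum]
    refine Finset.sum_congr rfl (fun e _ => ?_)
    by_cases h : C.tgt e = p <;> simp [h, grad, Pi.smul_apply, smul_eq_mul]
    ring

lemma lap_apply (f : C.V → ℝ) (p : C.V) :
    lap C f p = ∑ e, if C.tgt e = p then grad C f e else 0 := rfl

/-- Summation over vertices as a linear map. -/
noncomputable def sumV (C : TropCurve) : (C.V → ℝ) →ₗ[ℝ] ℝ where
  toFun f := ∑ p, f p
  map_add' f g := by simp [Finset.sum_add_distrib]
  map_smul' c f := by simp [Finset.mul_sum]

lemma const_of_grad_zero (hconn : C.Connected) {f : C.V → ℝ}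
    (hloc : ∀ e, f (C.tgt e) = f (C.tgt (C.rev e))) (p q : C.V) : f p = f q := by
  have along : ∀ (ρ : List C.E) (hne : ρ ≠ []), List.Chain' (Rel C) ρ →
      f (C.tgt (C.rev (ρ.head hne))) = f (C.tgt (ρ.getLast hne)) := by
    intro ρ
    induction ρ with
    | nil => intro hne; exact absurd rfl hne
    | cons e t ih =>
      intro hne hc
      cases t with
      | nil => simpa using (hloc e).symm
      | cons e' t' =>
        have h1 : Rel C e e' := (List.isChain_cons_cons.1 hc).1
        have IH := ih (by simp) (List.isChain_cons_cons.1 hc).2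
        rw [List.head_cons, List.getLast_cons (by simp)]
        calc f (C.tgt (C.rev e)) = f (C.tgt e) := (hloc e).symm
          _ = f (C.tgt (C.rev e')) := by rw [h1]
          _ = f (C.tgt (((e' :: t').head (by simp)))) := by rw [List.head_cons, ← hloc e']
          _ = f (C.tgt ((e' :: t').getLast (by simp))) := by
              rw [← IH]; rw [List.head_cons, hloc e']
  rcases hconn p q with rfl | ⟨ρ, hne, hρ, hh, hl⟩
  · rfl
  · have := along ρ hne ((isPath_iff_chain' ρ).1 hρ)
    rw [hh, hl] at this
    exact this

lemma lap_energy (f : C.V → ℝ) :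
    ∑ e, C.len e * (grad C f e * grad C f e) = 2 * ∑ p, f p * lap C f p := by
  have h := energy f (grad C f) (grad_rev f)
  simp_rw [lap_apply]
  rw [← h]
  refine Finset.sum_congr rfl (fun e _ => ?_)
  rw [← len_mul_grad f e]; ring

lemma ker_lap_eq (hconn : C.Connected) :
    LinearMap.ker (lap C) = Submodule.span ℝ {(fun _ => 1 : C.V → ℝ)} := by
  apply le_antisymm
  · intro f hf
    have hlap : lap C f = 0 := hf
    have hE : ∑ e, C.len e * (grad C f e * grad C f e) = 0 := by
      rw [lap_energy, hlap]
      simp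
    have hg : ∀ e, grad C f e = 0 := by
      have hnn : ∀ e ∈ Finset.univ, (0:ℝ) ≤ C.len e * (grad C f e * grad C f e) :=
        fun e _ => mul_nonneg (C.len_pos e).le (mul_self_nonneg _)
      intro e
      have := (Finset.sum_eq_zero_iff_of_nonneg hnn).1 hE e (Finset.mem_univ e)
      rcases mul_eq_zero.1 this with h | h
      · exact absurd h (C.len_pos e).ne'
      · exact mul_self_eq_zero.1 h
    have hloc : ∀ e, f (C.tgt e) = f (C.tgt (C.rev e)) := by
      intro e
      have := hg e
      rw [grad, div_eq_zero_iff] at this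
      rcases this with h | h
      · exact sub_eq_zero.1 h
      · exact absurd h (C.len_pos e).ne'
    rcases isEmpty_or_nonempty C.V with hV | hV
    · rw [Submodule.mem_span_singleton]
      exact ⟨0, by funext p; exact (hV.false p).elim⟩
    · rw [Submodule.mem_span_singleton]
      refine ⟨f hV.some, ?_⟩
      funext p
      simp only [Pi.smul_apply, smul_eq_mul, mul_one]
      exact const_of_grad_zero hconn hloc _ _
  · rw [Submodule.span_le, Set.singleton_subset_iff]
    show lap C (fun _ => 1) = 0
    funext p
    simp [lap, grad]

lemma range_lap_le : LinearMap.range (lap C) ≤ LinearMap.ker (sumV C) := by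
  rintro _ ⟨f, rfl⟩
  show ∑ p, lap C f p = 0
  have h1 : ∑ p, lap C f p = ∑ p, (1:ℝ) * ∑ e, (if C.tgt e = p then grad C f e else 0) := by
    refine Finset.sum_congr rfl (fun p _ => ?_)
    rw [one_mul, lap_apply]
  rw [h1, fiber_sum (fun _ => (1:ℝ)) (grad C f)]
  simp only [one_mul]
  exact sum_rev_zero (grad C f) (grad_rev f)

lemma lap_surj (hconn : C.Connected) (hV : Nonempty C.V)
    (u : C.V → ℝ) (hu : ∑ p, u p = 0) : ∃ f, lap C f = u := by
  have hone : (fun _ => (1:ℝ) : C.V → ℝ) ≠ 0 := by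
    intro h
    have := congrFun h hV.some
    simp at this
  have hcard : 1 ≤ Fintype.card C.V := Fintype.card_pos
  have hkerlap : Module.finrank ℝ (LinearMap.ker (lap C)) = 1 := by
    rw [ker_lap_eq hconn]
    exact finrank_span_singleton hone
  have hrn := LinearMap.finrank_range_add_finrank_ker (lap C)
  rw [hkerlap, Module.finrank_fintype_fun_eq_card] at hrn
  have hsurj : Function.Surjective (sumV C) := by
    intro c
    refine ⟨fun _ => c / (Fintype.card C.V), ?_⟩
    show ∑ _p : C.V, c / (Fintype.card C.V) = c
    rw [Finset.sum_const, Finset.card_univ, nsmul_eq_mul]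
    field_simp
  have hrn2 := LinearMap.finrank_range_add_finrank_ker (sumV C)
  rw [LinearMap.range_eq_top.2 hsurj, finrank_top, Module.finrank_self,
    Module.finrank_fintype_fun_eq_card] at hrn2
  have heq : LinearMap.range (lap C) = LinearMap.ker (sumV C) := by
    refine Submodule.eq_of_le_of_finrank_le range_lap_le ?_
    omega
  have : u ∈ LinearMap.ker (sumV C) := hu
  rw [← heq] at this
  exact this

/-! ### Telescoping for gradient forms -/

lemma tele (f : C.V → ℝ) : ∀ (ρ : List C.E), List.Chain' (Rel C) ρ → (hne : ρ ≠ []) →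
    (ρ.map (fun e => f (C.tgt e) - f (C.tgt (C.rev e)))).sum
      = f (C.tgt (ρ.getLast hne)) - f (C.tgt (C.rev (ρ.head hne)))
  | [], _, hne => absurd rfl hne
  | [e], _, _ => by simp
  | e :: e' :: t, h, _ => by
    have h1 : Rel C e e' := (List.isChain_cons_cons.1 h).1
    have IH := tele f (e' :: t) (List.isChain_cons_cons.1 h).2 (by simp)
    rw [List.map_cons, List.sum_cons, IH, List.head_cons, List.getLast_cons_cons,
      List.head_cons]
    have h2 : C.tgt e = C.tgt (C.rev e') := h1
    rw [← h2]
    ring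

end TropCurve

/-- For a tropical curve `C = (G, ℓ)` with connected graph `G`
having at least `2` leaves, `Ω(C)` is the direct sum of the subspace `Ω_0(C)` of
exact 1-forms and the subspace `Ω_H(C)` of holomorphic 1-forms. -/
theorem omega_eq_direct_sum_exact_holo (C : TropCurve) (hconn : C.Connected)
    (hleaves : 2 ≤ Fintype.card C.L) :
    C.Omega0 ⊓ C.OmegaH = ⊥ ∧ C.Omega0 ⊔ C.OmegaH = C.Omega := by
  classical
  have hLne : Nonempty C.L := Fintype.card_pos_iff.1 (by omega)
  have hV : Nonempty C.V := ⟨C.leafV hLne.some⟩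
  constructor
  · rw [eq_bot_iff]
    rintro w ⟨hw0, hwH⟩
    rw [Submodule.mem_bot]
    exact TropCurve.exact_holo_zero hconn hV hw0 hwH.2
  · apply le_antisymm
    · exact sup_le (fun w hw => hw.1) (fun w hw => hw.1)
    · intro w hw
      -- residues of w
      set r : C.L → ℝ := fun l => w (Sum.inr l) with hr
      have hsum_r : ∑ l, r l = 0 := by
        have htot : ∑ p, ∑ h : C.E ⊕ C.L, (if C.vert h = p then w h else 0) = 0 := by
          refine Finset.sum_eq_zero (fun p _ => hw.2 p)
        rw [Finset.sum_comm] at htot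
        have h1 : ∀ h : C.E ⊕ C.L, ∑ p, (if C.vert h = p then w h else 0) = w h := by
          intro h; simp [Finset.sum_ite_eq]
        simp_rw [h1] at htot
        rw [Fintype.sum_sum_type] at htot
        have h2 : ∑ e : C.E, w (Sum.inl e) = 0 :=
          TropCurve.sum_rev_zero (fun e => w (Sum.inl e)) hw.1
        rw [h2, zero_add] at htot
        exact htot
      set u : C.V → ℝ := fun p => -∑ l, (if C.leafV l = p then r l else 0) with hu
      have hsum_u : ∑ p, u p = 0 := by
        rw [hu]
        simp only [Finset.sum_neg_distrib]
        rw [Finset.sum_comm]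
        have h1 : ∀ l, ∑ p, (if C.leafV l = p then r l else 0) = r l := by
          intro l; simp [Finset.sum_ite_eq]
        simp_rw [h1]
        rw [hsum_r, neg_zero]
      obtain ⟨f, hf⟩ := TropCurve.lap_surj hconn hV u hsum_u
      set w₀ : C.E ⊕ C.L → ℝ := Sum.elim (TropCurve.grad C f) r with hw₀
      have hw₀rev : ∀ e, w₀ (Sum.inl (C.rev e)) = - w₀ (Sum.inl e) := by
        intro e
        simp only [hw₀, Sum.elim_inl]
        exact TropCurve.grad_rev f e
      have hw₀form : C.IsOneForm w₀ := by
        refine ⟨hw₀rev, fun p => ?_⟩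
        rw [Fintype.sum_sum_type]
        simp only [TropCurve.vert, Sum.elim_inl, Sum.elim_inr, hw₀]
        have hlapp : ∑ e, (if C.tgt e = p then TropCurve.grad C f e else 0) = u p := by
          have := congrFun hf p
          rw [TropCurve.lap_apply] at this
          exact this
        rw [hlapp, hu]
        ring
      have hw₀exact : w₀ ∈ C.Omega0 := by
        refine ⟨hw₀form, fun ρ hρ => ?_⟩
        rcases eq_or_ne ρ [] with rfl | hne
        · simp [TropCurve.pathIntegral_eq_listSum]
        · rw [TropCurve.pathIntegral_eq_listSum]
          have hmap : ρ.map (fun e => C.len e * w₀ (Sum.inl e))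
              = ρ.map (fun e => f (C.tgt e) - f (C.tgt (C.rev e))) := by
            refine List.map_congr_left (fun e _ => ?_)
            simp only [hw₀, Sum.elim_inl]
            exact TropCurve.len_mul_grad f e
          rw [hmap, TropCurve.tele f ρ ((TropCurve.isPath_iff_chain' ρ).1 hρ.1) hne]
          rw [hρ.2 hne]
          ring
      have hdiff : w - w₀ ∈ C.OmegaH := by
        refine ⟨?_, fun l => ?_⟩
        · have h1 : w ∈ C.Omega := hw
          have h2 : w₀ ∈ C.Omega := hw₀form
          exact C.Omega.sub_mem h1 h2
        · simp only [Pi.sub_apply, hw₀, Sum.elim_inr, hr]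
          ring
      have : w = w₀ + (w - w₀) := by ring
      rw [this]
      exact Submodule.add_mem _ (Submodule.mem_sup_left hw₀exact)
        (Submodule.mem_sup_right hdiff)
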